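/- Let S = (N, M0) be a WMG≤ system without source places. Then S is live if and only if every elementary circuit P-subsystem of S is live. -/

import Mathlib

open scoped Classical

structure PetriNet (P T : Type) where
  pre : P → T → ℕ
  post : T → P → ℕ

namespace PetriNet

variable {P T : Type}

def enabled (N : PetriNet P T) (M : P → ℕ) (t : T) : Prop :=
  ∀ p, N.pre p t ≤ M p

def fire (N : PetriNet P T) (M : P → ℕ) (t : T) : P → ℕ :=
  fun p => M p - N.pre p t + N.post t p

def feasible (N : PetriNet P T) : (P → ℕ) → List T → (P → ℕ) → Prop
  | M, [], M' => M' = M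
  | M, t :: σ, M' => N.enabled M t ∧ feasible N (N.fire M t) σ M'

def reachable (N : PetriNet P T) (M0 M : P → ℕ) : Prop :=
  ∃ σ : List T, N.feasible M0 σ M

def inc (N : PetriNet P T) (p : P) (t : T) : ℤ :=
  (N.post t p : ℤ) - (N.pre p t : ℤ)

def potReach [Fintype T] (N : PetriNet P T) (M0 M : P → ℕ) : Prop :=
  ∃ Y : T → ℕ, ∀ p, (M p : ℤ) = (M0 p : ℤ) + ∑ t, N.inc p t * (Y t : ℤ)

def live (N : PetriNet P T) (M0 : P → ℕ) : Prop :=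
  ∀ (t : T) (M : P → ℕ), N.reachable M0 M →
    ∃ M', N.reachable M M' ∧ N.enabled M' t

def bounded (N : PetriNet P T) (M0 : P → ℕ) : Prop :=
  ∃ k : ℕ, ∀ M : P → ℕ, N.reachable M0 M → ∀ p, M p ≤ k

def reversible (N : PetriNet P T) (M0 : P → ℕ) : Prop :=
  ∀ M : P → ℕ, N.reachable M0 M → N.reachable M M0

def rev (N : PetriNet P T) : PetriNet P T :=
  ⟨fun p t => N.post t p, fun t p => N.pre p t⟩

def propR (N : PetriNet P T) (M0 : P → ℕ) : Prop :=
  N.reversible M0 ∧ N.rev.reversible M0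

def placePre [Fintype T] (N : PetriNet P T) (p : P) : Finset T :=
  Finset.univ.filter fun t => 0 < N.post t p

def placePost [Fintype T] (N : PetriNet P T) (p : P) : Finset T :=
  Finset.univ.filter fun t => 0 < N.pre p t

def transPre [Fintype P] (N : PetriNet P T) (t : T) : Finset P :=
  Finset.univ.filter fun p => 0 < N.pre p t

def transPost [Fintype P] (N : PetriNet P T) (t : T) : Finset P :=
  Finset.univ.filter fun p => 0 < N.post t p

def arc (N : PetriNet P T) : (P ⊕ T) → (P ⊕ T) → Prop
  | Sum.inl p, Sum.inr t => 0 < N.pre p t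
  | Sum.inr t, Sum.inl p => 0 < N.post t p
  | _, _ => False

def stronglyConnected (N : PetriNet P T) : Prop :=
  ∀ x y : P ⊕ T, Relation.ReflTransGen N.arc x y

def connectedNet (N : PetriNet P T) : Prop :=
  ∀ x y : P ⊕ T, Relation.ReflTransGen (fun a b => N.arc a b ∨ N.arc b a) x y

def ordinary (N : PetriNet P T) : Prop :=
  ∀ p t, N.pre p t ≤ 1 ∧ N.post t p ≤ 1

def isWMGle [Fintype T] (N : PetriNet P T) : Prop :=
  ∀ p, (N.placePre p).card ≤ 1 ∧ (N.placePost p).card ≤ 1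

def deadlock (N : PetriNet P T) (M : P → ℕ) : Prop :=
  ∀ t, ¬ N.enabled M t

end PetriNet


namespace PetriNet

variable {P T : Type}

/-- A transition is adjacent to the place set `D`. -/
def adjT (N : PetriNet P T) (D : Finset P) (t : T) : Prop :=
  ∃ p ∈ D, 0 < N.pre p t ∨ 0 < N.post t p

/-- The P-subnet induced by the place set `D`:
its transitions are those adjacent to `D`, weights are restricted. -/
def psubnet (N : PetriNet P T) (D : Finset P) :
    PetriNet {p : P // p ∈ D} {t : T // N.adjT D t} :=
  ⟨fun p t => N.pre p.1 t.1, fun t p => N.post t.1 p.1⟩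

/-- The net is a single directed cycle visiting each node exactly once. -/
def isCircuitNet [Fintype P] [Fintype T] (N : PetriNet P T) : Prop :=
  Nonempty (P ⊕ T) ∧ N.stronglyConnected ∧
  (∀ p, (N.placePre p).card = 1 ∧ (N.placePost p).card = 1) ∧
  (∀ t, (N.transPre t).card = 1 ∧ (N.transPost t).card = 1)

end PetriNet

/-!
(⇒) In a circuit every place has a single consumer, so by the marking equation the firing counts
of a run that ends in a deadlock bound those of every run from the same marking. If a transition
of a circuit subsystem died, the marking equation propagated around the circuit would bound all
firing counts, so a deadlock would be reachable; but the live net fires that transition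
arbitrarily often, and its runs project onto runs of the subsystem.

(⇐) If some transition dies, move to a marking `M₁` after which no further transition dies. Each
dead transition `t` then has an input place `p` that is short of tokens and whose feeder (which
exists since there are no source places) is dead as well: a live feeder could pump `p`, which only
`t` consumes. Iterating `t ↦ feeder of p` ends in a cycle of dead transitions; its places induce
an elementary circuit P-subsystem in which the restriction of `M₁` is a reachable deadlock.
-/

open Function in
lemma Function.exists_iterate_mem_periodicPts {α : Type*} [Finite α] (f : α → α) (x : α) :
    ∃ m, f^[m] x ∈ periodicPts f := by
  obtain ⟨i, j, hne, h⟩ := Finite.exists_ne_map_eq_of_infinite fun n => f^[n] x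
  wlog hij : i < j generalizing i j
  · exact this j i hne.symm h.symm (by omega)
  refine ⟨i, mk_mem_periodicPts (n := j - i) (by omega) ?_⟩
  change f^[j - i] (f^[i] x) = f^[i] x
  rw [← iterate_add_apply, Nat.sub_add_cancel hij.le]
  exact h.symm

namespace List

variable {α : Type*} [Fintype α] [BEq α] [LawfulBEq α]

lemma sum_mul_count_cons (a : α → ℕ) (x : α) (l : List α) :
    ∑ y, a y * (x :: l).count y = a x + ∑ y, a y * l.count y := by
  simp only [count_cons, beq_iff_eq, mul_add, Finset.sum_add_distrib, mul_ite, mul_one,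
    mul_zero, Finset.sum_ite_eq, Finset.mem_univ, if_true]
  ring

lemma sum_count_eq_length (l : List α) : ∑ y, l.count y = l.length := by
  induction l with
  | nil => simp
  | cons x l ih => simpa [ih, add_comm] using sum_mul_count_cons (fun _ => 1) x l

end List

namespace PetriNet

open Function

variable {P T : Type}

section Runs

variable (N : PetriNet P T)

lemma feasible_append {M M' M'' : P → ℕ} {σ τ : List T}
    (h : N.feasible M σ M') (h' : N.feasible M' τ M'') : N.feasible M (σ ++ τ) M'' := by
  induction σ generalizing M with
  | nil => cases h; exact h'
  | cons t σ ih => exact ⟨h.1, ih h.2⟩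

lemma exists_of_feasible_append {M M'' : P → ℕ} {σ τ : List T}
    (h : N.feasible M (σ ++ τ) M'') : ∃ M', N.feasible M σ M' ∧ N.feasible M' τ M'' := by
  induction σ generalizing M with
  | nil => exact ⟨M, rfl, h⟩
  | cons t σ ih =>
    obtain ⟨M', h₁, h₂⟩ := ih h.2
    exact ⟨M', ⟨h.1, h₁⟩, h₂⟩

lemma feasible_snoc {M M' : P → ℕ} {σ : List T} {t : T}
    (h : N.feasible M σ M') (ht : N.enabled M' t) : N.feasible M (σ ++ [t]) (N.fire M' t) :=
  N.feasible_append h ⟨ht, rfl⟩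

lemma reachable_refl (M : P → ℕ) : N.reachable M M := ⟨[], rfl⟩

lemma reachable_trans {M M' M'' : P → ℕ}
    (h : N.reachable M M') (h' : N.reachable M' M'') : N.reachable M M'' :=
  let ⟨σ, hσ⟩ := h; let ⟨τ, hτ⟩ := h'; ⟨σ ++ τ, N.feasible_append hσ hτ⟩

lemma reachable_fire {M : P → ℕ} {t : T} (h : N.enabled M t) : N.reachable M (N.fire M t) :=
  ⟨[t], h, rfl⟩

lemma fire_add_pre {M : P → ℕ} {t : T} (h : N.enabled M t) (p : P) :
    N.fire M t p + N.pre p t = M p + N.post t p := by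
  have := h p
  simp only [fire]
  omega

/-- The marking equation, with both sides moved so that no subtraction occurs. -/
lemma feasible_marking_eq [Fintype T] [BEq T] [LawfulBEq T] {M M' : P → ℕ} {σ : List T}
    (h : N.feasible M σ M') (p : P) :
    M' p + ∑ t, N.pre p t * σ.count t = M p + ∑ t, N.post t p * σ.count t := by
  induction σ generalizing M with
  | nil => cases h; simp
  | cons t σ ih =>
    have := ih h.2
    have := N.fire_add_pre h.1 p
    rw [List.sum_mul_count_cons, List.sum_mul_count_cons]
    omega

lemma eq_of_reachable_deadlock {M M' : P → ℕ} (hM : N.deadlock M) (h : N.reachable M M') :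
    M' = M := by
  obtain ⟨_ | ⟨t, σ⟩, hσ⟩ := h
  · exact hσ
  · exact absurd hσ.1 (hM t)

lemma not_live_of_reachable_deadlock [Nonempty T] {M0 M : P → ℕ} (h : N.reachable M0 M)
    (hM : N.deadlock M) : ¬ N.live M0 := fun hl =>
  let ⟨_, hM', ht⟩ := hl (Classical.arbitrary T) M h
  hM _ (N.eq_of_reachable_deadlock hM hM' ▸ ht)

lemma exists_reachable_deadlock_of_length_le {M : P → ℕ} (L : ℕ)
    (hL : ∀ σ M', N.feasible M σ M' → σ.length ≤ L) :
    ∃ M', N.reachable M M' ∧ N.deadlock M' := by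
  by_contra! h
  have : ∀ n, ∃ σ M', N.feasible M σ M' ∧ σ.length = n := by
    intro n
    induction n with
    | zero => exact ⟨[], M, rfl, rfl⟩
    | succ n ih =>
      obtain ⟨σ, M', hσ, rfl⟩ := ih
      obtain ⟨t, ht⟩ : ∃ t, N.enabled M' t := by simpa [deadlock] using h M' ⟨σ, hσ⟩
      exact ⟨σ ++ [t], _, N.feasible_snoc hσ ht, by simp⟩
  obtain ⟨σ, M', hσ, hlen⟩ := this (L + 1)
  have := hL σ M' hσ
  omega

def deadAt (M : P → ℕ) (t : T) : Prop :=
  ∀ M', N.reachable M M' → ¬ N.enabled M' t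

def countBounded [BEq T] (M : P → ℕ) (t : T) : Prop :=
  ∃ b, ∀ σ M', N.feasible M σ M' → σ.count t ≤ b

end Runs

section Dead

variable {N : PetriNet P T}

lemma deadAt.of_reachable {M M' : P → ℕ} {t : T} (ht : N.deadAt M t) (h : N.reachable M M') :
    N.deadAt M' t := fun _ h' => ht _ (N.reachable_trans h h')

lemma deadAt.not_mem {M M' : P → ℕ} {t : T} (ht : N.deadAt M t) {σ : List T}
    (h : N.feasible M σ M') : t ∉ σ := by
  induction σ generalizing M with
  | nil => simp
  | cons u σ ih =>
    rintro (_ | ⟨_, hmem⟩)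
    · exact ht M (N.reachable_refl M) h.1
    · exact ih (ht.of_reachable (N.reachable_fire h.1)) h.2 hmem

lemma deadAt.countBounded [BEq T] [LawfulBEq T] {M : P → ℕ} {t : T} (ht : N.deadAt M t) :
    N.countBounded M t :=
  ⟨0, fun _ _ h => (List.count_eq_zero.2 (ht.not_mem h)).le⟩

lemma exists_deadAt_of_not_live {M0 : P → ℕ} (h : ¬ N.live M0) :
    ∃ t M, N.reachable M0 M ∧ N.deadAt M t := by
  simp only [live, not_forall, not_exists, not_and] at h
  obtain ⟨t, M, hM, ht⟩ := h
  exact ⟨t, M, hM, ht⟩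

lemma exists_reachable_deadAt_stable [Fintype T] (M : P → ℕ) :
    ∃ M₁, N.reachable M M₁ ∧
      ∀ M', N.reachable M₁ M' → ∀ t, N.deadAt M' t → N.deadAt M₁ t := by
  induction hn : Fintype.card T - (Finset.univ.filter (N.deadAt M)).card
    using Nat.strong_induction_on generalizing M with
  | _ n ih =>
  by_cases h : ∀ M', N.reachable M M' → ∀ t, N.deadAt M' t → N.deadAt M t
  · exact ⟨M, N.reachable_refl M, h⟩
  push Not at h
  obtain ⟨M', hM', t, ht', ht⟩ := h
  have hlt : (Finset.univ.filter (N.deadAt M)).card < (Finset.univ.filter (N.deadAt M')).card := by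
    refine Finset.card_lt_card ((Finset.ssubset_iff_of_subset fun u => ?_).2 ⟨t, ?_⟩)
    · simpa using fun hu => hu.of_reachable hM'
    · simpa using ⟨ht', ht⟩
  have := Finset.card_le_univ (Finset.univ.filter (N.deadAt M'))
  obtain ⟨M₁, hM₁, hstab⟩ := ih _ (by omega) M' rfl
  exact ⟨M₁, N.reachable_trans hM' hM₁, hstab⟩

end Dead

section Counting

variable {N : PetriNet P T} [Fintype T]

lemma eq_of_pre_pos {p : P} (hp : (N.placePost p).card ≤ 1) {t u : T}
    (ht : 0 < N.pre p t) (hu : 0 < N.pre p u) : t = u :=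
  Finset.card_le_one.1 hp t (by simp [placePost, ht]) u (by simp [placePost, hu])

lemma eq_of_post_pos {p : P} (hp : (N.placePre p).card ≤ 1) {t u : T}
    (ht : 0 < N.post t p) (hu : 0 < N.post u p) : t = u :=
  Finset.card_le_one.1 hp t (by simp [placePre, ht]) u (by simp [placePre, hu])

lemma sum_pre_mul_eq {p : P} (hp : (N.placePost p).card ≤ 1) {t : T} (ht : 0 < N.pre p t)
    (c : T → ℕ) : ∑ u, N.pre p u * c u = N.pre p t * c t := by
  refine Finset.sum_eq_single t (fun u _ hu => ?_) (by simp)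
  rw [Nat.eq_zero_of_not_pos fun h => hu (eq_of_pre_pos hp h ht), zero_mul]

section Count

variable [BEq T] [LawfulBEq T]

lemma count_le_of_feasible_deadlock (hout : ∀ p, (N.placePost p).card ≤ 1)
    {M Md : P → ℕ} {α : List T} (hα : N.feasible M α Md) (hd : N.deadlock Md) :
    ∀ (σ : List T) {M' : P → ℕ}, N.feasible M σ M' →
      ∀ u, σ.count u ≤ α.count u := by
  intro σ
  induction σ using List.reverseRecOn with
  | nil => simp
  | append_singleton σ t ih =>
    intro M'' h u
    obtain ⟨M', hσ, ht, -⟩ := N.exists_of_feasible_append h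
    have ih := ih hσ
    suffices σ.count t < α.count t by
      rw [List.count_append, List.count_singleton]
      have := ih u
      split_ifs <;> grind
    by_contra! hle
    -- `t` is short of tokens at some input place `q` in the deadlock, and only `t` consumes `q`.
    obtain ⟨q, hq⟩ : ∃ q, Md q < N.pre q t := by simpa [enabled] using hd t
    have hqt : 0 < N.pre q t := by omega
    have hσq := N.feasible_marking_eq hσ q
    have hαq := N.feasible_marking_eq hα q
    rw [sum_pre_mul_eq (hout q) hqt] at hσq hαq
    have : ∑ w, N.post w q * σ.count w ≤ ∑ w, N.post w q * α.count w :=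
      Finset.sum_le_sum fun w _ => Nat.mul_le_mul_left _ (ih w)
    have := ht q
    have := Nat.mul_le_mul_left (N.pre q t) hle
    omega

lemma countBounded_of_pre_pos {M : P → ℕ} {q : P}
    (hq : ∀ w, 0 < N.post w q → N.countBounded M w) {u : T} (hu : 0 < N.pre q u) :
    N.countBounded M u := by
  have : ∀ w, ∃ b, 0 < N.post w q → ∀ σ M', N.feasible M σ M' → σ.count w ≤ b := by
    intro w
    by_cases hw : 0 < N.post w q
    · obtain ⟨b, hb⟩ := hq w hw
      exact ⟨b, fun _ => hb⟩
    · exact ⟨0, fun h => absurd h hw⟩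
  choose b hb using this
  refine ⟨M q + ∑ w, N.post w q * b w, fun σ M' h => ?_⟩
  have hin : ∑ w, N.post w q * σ.count w ≤ ∑ w, N.post w q * b w := by
    refine Finset.sum_le_sum fun w _ => ?_
    rcases Nat.eq_zero_or_pos (N.post w q) with hw | hw
    · simp [hw]
    · exact Nat.mul_le_mul_left _ (hb w hw σ M' h)
  have hout : N.pre q u * σ.count u ≤ ∑ w, N.pre q w * σ.count w :=
    Finset.single_le_sum (f := fun w => N.pre q w * σ.count w) (fun _ _ => Nat.zero_le _)
      (Finset.mem_univ u)
  have := N.feasible_marking_eq h q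
  have := Nat.le_mul_of_pos_left (σ.count u) hu
  omega

lemma countBounded_of_reflTransGen (hin : ∀ p, (N.placePre p).card ≤ 1) {M : P → ℕ} {t : T}
    (ht : N.deadAt M t) {x : P ⊕ T} (hx : Relation.ReflTransGen N.arc (.inr t) x) :
    x.elim (fun q => ∀ w, 0 < N.post w q → N.countBounded M w) (N.countBounded M) := by
  induction hx with
  | refl => exact ht.countBounded
  | @tail y z _ hyz ih =>
    rcases y with q | v <;> rcases z with q' | u <;>
      simp only [Sum.elim_inl, Sum.elim_inr] at ih ⊢
    · exact False.elim hyz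
    · exact countBounded_of_pre_pos ih hyz
    · exact fun w hw => eq_of_post_pos (hin q') hyz hw ▸ ih
    · exact False.elim hyz

end Count

lemma exists_reachable_deadlock_of_deadAt (hin : ∀ p, (N.placePre p).card ≤ 1)
    (hsc : N.stronglyConnected) {M : P → ℕ} {t : T} (ht : N.deadAt M t) :
    ∃ M', N.reachable M M' ∧ N.deadlock M' := by
  choose b hb using fun u => countBounded_of_reflTransGen hin ht (hsc (.inr t) (.inr u))
  refine N.exists_reachable_deadlock_of_length_le (∑ u, b u) fun σ M' h => ?_
  rw [← List.sum_count_eq_length]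
  exact Finset.sum_le_sum fun u _ => hb u σ M' h

end Counting

section Projection

variable (N : PetriNet P T)

noncomputable def proj (D : Finset P) (σ : List T) : List {t : T // N.adjT D t} :=
  σ.filterMap fun t => if h : N.adjT D t then some ⟨t, h⟩ else none

variable {N} {D : Finset P}

lemma proj_cons_of_adjT {u : T} (hu : N.adjT D u) (σ : List T) :
    N.proj D (u :: σ) = ⟨u, hu⟩ :: N.proj D σ := by
  simp [proj, hu]

lemma proj_cons_of_not_adjT {u : T} (hu : ¬ N.adjT D u) (σ : List T) :
    N.proj D (u :: σ) = N.proj D σ := by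
  simp [proj, hu]

lemma feasible_psubnet_proj {M M' : P → ℕ} {σ : List T} (h : N.feasible M σ M') :
    (N.psubnet D).feasible (fun p => M p.1) (N.proj D σ) (fun p => M' p.1) := by
  induction σ generalizing M with
  | nil => cases h; rfl
  | cons u σ ih =>
    by_cases hu : N.adjT D u
    · rw [proj_cons_of_adjT hu]
      exact ⟨fun p => h.1 p.1, ih h.2⟩
    · rw [proj_cons_of_not_adjT hu]
      have hfire : (fun p : {p // p ∈ D} => N.fire M u p.1) = fun p => M p.1 := funext fun p => by
        have : N.pre p.1 u = 0 ∧ N.post u p.1 = 0 := by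
          simpa [adjT] using fun h' => hu ⟨p.1, p.2, h'⟩
        simp [fire, this]
      exact hfire ▸ ih h.2

lemma reachable_psubnet {M M' : P → ℕ} (h : N.reachable M M') :
    (N.psubnet D).reachable (fun p => M p.1) (fun p => M' p.1) :=
  let ⟨σ, hσ⟩ := h; ⟨N.proj D σ, feasible_psubnet_proj hσ⟩

lemma count_proj [BEq T] [LawfulBEq T] (σ : List T) (t : {t : T // N.adjT D t}) :
    (N.proj D σ).count t = σ.count t.1 := by
  induction σ with
  | nil => rfl
  | cons u σ ih =>
    by_cases hu : N.adjT D u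
    · simp [proj_cons_of_adjT hu, List.count_cons, ih]
    · have : u ≠ t.1 := fun h => hu (h ▸ t.2)
      simp [proj_cons_of_not_adjT hu, ih, this]

end Projection

lemma live.exists_count_ge {N : PetriNet P T} [BEq T] [LawfulBEq T] {M0 : P → ℕ}
    (hl : N.live M0) (t : T) (n : ℕ) :
    ∀ M, N.reachable M0 M → ∃ σ M', N.feasible M σ M' ∧ n ≤ σ.count t := by
  induction n with
  | zero => exact fun M _ => ⟨[], M, rfl, Nat.zero_le _⟩
  | succ n ih =>
    intro M hM
    obtain ⟨M₁, ⟨τ, hτ⟩, ht⟩ := hl t M hM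
    have hτt := N.feasible_snoc hτ ht
    obtain ⟨σ, M', hσ, hn⟩ := ih _ (N.reachable_trans hM ⟨_, hτt⟩)
    refine ⟨τ ++ [t] ++ σ, M', N.feasible_append hτt hσ, ?_⟩
    simp only [List.count_append, List.count_singleton_self]
    omega

theorem live_psubnet_of_isCircuitNet [Fintype T] {N : PetriNet P T} {M0 : P → ℕ}
    (hl : N.live M0) {D : Finset P} (hC : (N.psubnet D).isCircuitNet) :
    (N.psubnet D).live (fun p => M0 p.1) := by
  intro t M hM
  by_contra! hdead
  obtain ⟨Md, hMd, hd⟩ :=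
    exists_reachable_deadlock_of_deadAt (fun p => (hC.2.2.1 p).1.le) hC.2.1 (t := t) hdead
  obtain ⟨α, hα⟩ := (N.psubnet D).reachable_trans hM hMd
  obtain ⟨σ, M', hσ, hcount⟩ :=
    hl.exists_count_ge t.1 (α.count t + 1) M0 (N.reachable_refl M0)
  have := count_le_of_feasible_deadlock (fun p => (hC.2.2.1 p).2.le) hα hd _
    (feasible_psubnet_proj hσ) t
  rw [count_proj] at this
  omega

section Starved

variable {N : PetriNet P T}

lemma le_of_feasible_of_pre_eq_zero {M M' : P → ℕ} {σ : List T} {p : P}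
    (hσ : ∀ u ∈ σ, N.pre p u = 0) (h : N.feasible M σ M') : M p ≤ M' p := by
  induction σ generalizing M with
  | nil => cases h; rfl
  | cons u σ ih =>
    refine le_trans ?_ (ih (fun v hv => hσ v (.tail _ hv)) h.2)
    simp [fire, hσ u (.head _)]

variable [Fintype T] (hout : ∀ p, (N.placePost p).card ≤ 1) {M : P → ℕ} {t : T}
  (ht : N.deadAt M t)
include hout ht

lemma deadAt.le_of_reachable {p : P} (hp : 0 < N.pre p t) {M' : P → ℕ}
    (h : N.reachable M M') : M p ≤ M' p :=
  let ⟨_, hσ⟩ := h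
  le_of_feasible_of_pre_eq_zero (fun _ hu => Nat.eq_zero_of_not_pos fun hu' =>
    ht.not_mem hσ (eq_of_pre_pos (hout p) hu' hp ▸ hu)) hσ

lemma deadAt.exists_reachable_lt {p : P} (hp : 0 < N.pre p t) {u : T} (hu : 0 < N.post u p)
    (hlive : ¬ N.deadAt M u) : ∃ M', N.reachable M M' ∧ M p < M' p := by
  obtain ⟨M₁, hM₁, hen⟩ : ∃ M₁, N.reachable M M₁ ∧ N.enabled M₁ u := by
    simpa [deadAt] using hlive
  have hpu : N.pre p u = 0 := Nat.eq_zero_of_not_pos fun hpu =>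
    ht M₁ hM₁ (eq_of_pre_pos (hout p) hpu hp ▸ hen)
  refine ⟨_, N.reachable_trans hM₁ (N.reachable_fire hen), ?_⟩
  have := ht.le_of_reachable hout hp hM₁
  simp only [fire, hpu]
  omega

lemma deadAt.exists_reachable_add_le {p : P} (hp : 0 < N.pre p t) {u : T} (hu : 0 < N.post u p)
    (hlive : ∀ M', N.reachable M M' → ¬ N.deadAt M' u) (k : ℕ) :
    ∃ M', N.reachable M M' ∧ M p + k ≤ M' p := by
  induction k with
  | zero => exact ⟨M, N.reachable_refl M, le_rfl⟩
  | succ k ih =>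
    obtain ⟨M', hM', hk⟩ := ih
    obtain ⟨M'', hM'', hlt⟩ :=
      (ht.of_reachable hM').exists_reachable_lt hout hp hu (hlive M' hM')
    exact ⟨M'', N.reachable_trans hM' hM'', by omega⟩

lemma deadAt.exists_starved_place [Fintype P] :
    ∃ p, 0 < N.pre p t ∧ M p < N.pre p t ∧
      ∀ u, 0 < N.post u p → ∃ M', N.reachable M M' ∧ N.deadAt M' u := by
  by_contra! hfeed
  -- Pump every input place of `t` up to its weight: feeders that stay live add tokens, and
  -- since `t` is its only consumer no tokens are ever removed.
  suffices ∀ Q : Finset P, ∃ M', N.reachable M M' ∧ ∀ p ∈ Q, N.pre p t ≤ M' p by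
    obtain ⟨M', hM', hen⟩ := this Finset.univ
    exact ht M' hM' fun p => hen p (Finset.mem_univ p)
  intro Q
  induction Q using Finset.induction_on with
  | empty => exact ⟨M, N.reachable_refl M, by simp⟩
  | insert p Q _ ih =>
    obtain ⟨M', hM', hQ⟩ := ih
    have hmono {M''} (h : N.reachable M' M'') : ∀ q ∈ Q, N.pre q t ≤ M'' q := fun q hq => by
      rcases Nat.eq_zero_or_pos (N.pre q t) with h0 | hq0
      · omega
      · exact (hQ q hq).trans ((ht.of_reachable hM').le_of_reachable hout hq0 h)
    rcases Nat.eq_zero_or_pos (N.pre p t) with h0 | hp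
    · exact ⟨M', hM', by simpa [h0] using hQ⟩
    by_cases henough : N.pre p t ≤ M p
    · exact ⟨M', hM', by simpa using ⟨henough.trans (ht.le_of_reachable hout hp hM'), hQ⟩⟩
    obtain ⟨u, hu, hlive⟩ := hfeed p hp (not_le.1 henough)
    obtain ⟨M'', hM'', hk⟩ := (ht.of_reachable hM').exists_reachable_add_le hout hp hu
      (fun _ h => hlive _ (N.reachable_trans hM' h)) (N.pre p t)
    exact ⟨M'', N.reachable_trans hM' hM'', by simpa using ⟨by omega, hmono hM''⟩⟩

end Starved

noncomputable def cyclePlaces [Fintype P] (f : T → T) (pl : T → P) (s : T) : Finset P :=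
  Finset.univ.filter fun p => ∃ n, pl (f^[n] s) = p

lemma mem_cyclePlaces [Fintype P] {f : T → T} {pl : T → P} {s : T} {p : P} :
    p ∈ cyclePlaces f pl s ↔ ∃ n, pl (f^[n] s) = p := by
  simp [cyclePlaces]

section Cycle

variable [Fintype P] [Fintype T] {N : PetriNet P T} (hwmg : N.isWMGle)
  {f : T → T} {pl : T → P} {s : T}
  (hpre : ∀ n, 0 < N.pre (pl (f^[n] s)) (f^[n] s))
  (hpost : ∀ n, 0 < N.post (f^[n + 1] s) (pl (f^[n] s)))
include hwmg hpre hpost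

lemma adjT_cyclePlaces_iff {u : T} : N.adjT (cyclePlaces f pl s) u ↔ ∃ n, f^[n] s = u := by
  constructor
  · rintro ⟨p, hp, hu⟩
    obtain ⟨n, rfl⟩ := mem_cyclePlaces.1 hp
    rcases hu with hu | hu
    · exact ⟨n, eq_of_pre_pos (hwmg _).2 (hpre n) hu⟩
    · exact ⟨n + 1, eq_of_post_pos (hwmg _).1 (hpost n) hu⟩
  · rintro ⟨n, rfl⟩
    exact ⟨_, mem_cyclePlaces.2 ⟨n, rfl⟩, .inl (hpre n)⟩

lemma placePre_psubnet_cyclePlaces (p : {p // p ∈ cyclePlaces f pl s}) :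
    ((N.psubnet (cyclePlaces f pl s)).placePre p).card = 1 := by
  obtain ⟨n, hn⟩ := mem_cyclePlaces.1 p.2
  refine Finset.card_eq_one.2
    ⟨⟨f^[n + 1] s, (adjT_cyclePlaces_iff hwmg hpre hpost).2 ⟨_, rfl⟩⟩,
    Finset.eq_singleton_iff_unique_mem.2 ⟨?_, fun u hu => Subtype.ext ?_⟩⟩
  · simpa [placePre, psubnet, ← hn] using hpost n
  · simp only [placePre, psubnet, Finset.mem_filter, Finset.mem_univ, true_and, ← hn] at hu
    exact eq_of_post_pos (hwmg _).1 hu (hpost n)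

lemma placePost_psubnet_cyclePlaces (p : {p // p ∈ cyclePlaces f pl s}) :
    ((N.psubnet (cyclePlaces f pl s)).placePost p).card = 1 := by
  obtain ⟨n, hn⟩ := mem_cyclePlaces.1 p.2
  refine Finset.card_eq_one.2
    ⟨⟨f^[n] s, (adjT_cyclePlaces_iff hwmg hpre hpost).2 ⟨_, rfl⟩⟩,
    Finset.eq_singleton_iff_unique_mem.2 ⟨?_, fun u hu => Subtype.ext ?_⟩⟩
  · simpa [placePost, psubnet, ← hn] using hpre n
  · simp only [placePost, psubnet, Finset.mem_filter, Finset.mem_univ, true_and, ← hn] at hu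
    exact eq_of_pre_pos (hwmg _).2 hu (hpre n)

lemma transPre_psubnet_cyclePlaces (t : {t // N.adjT (cyclePlaces f pl s) t}) :
    ((N.psubnet (cyclePlaces f pl s)).transPre t).card = 1 := by
  obtain ⟨n, hn⟩ := (adjT_cyclePlaces_iff hwmg hpre hpost).1 t.2
  refine Finset.card_eq_one.2 ⟨⟨pl (f^[n] s), mem_cyclePlaces.2 ⟨n, rfl⟩⟩,
    Finset.eq_singleton_iff_unique_mem.2 ⟨?_, fun q hq => Subtype.ext ?_⟩⟩
  · simpa [transPre, psubnet, ← hn] using hpre n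
  · obtain ⟨m, hm⟩ := mem_cyclePlaces.1 q.2
    simp only [transPre, psubnet, Finset.mem_filter, Finset.mem_univ, true_and, ← hn, ← hm]
      at hq
    rw [← hm]
    exact congrArg pl (eq_of_pre_pos (hwmg _).2 (hpre m) hq)

lemma deadlock_psubnet_cyclePlaces {M : P → ℕ}
    (hM : ∀ n, M (pl (f^[n] s)) < N.pre (pl (f^[n] s)) (f^[n] s)) :
    (N.psubnet (cyclePlaces f pl s)).deadlock (fun p => M p.1) := by
  rintro ⟨u, hu⟩ hen
  obtain ⟨n, rfl⟩ := (adjT_cyclePlaces_iff hwmg hpre hpost).1 hu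
  exact (hM n).not_ge (hen ⟨_, mem_cyclePlaces.2 ⟨n, rfl⟩⟩)

variable (hs : s ∈ periodicPts f)
include hs

lemma transPost_psubnet_cyclePlaces (t : {t // N.adjT (cyclePlaces f pl s) t}) :
    ((N.psubnet (cyclePlaces f pl s)).transPost t).card = 1 := by
  obtain ⟨n, hn⟩ := (adjT_cyclePlaces_iff hwmg hpre hpost).1 t.2
  have hk := minimalPeriod_pos_of_mem_periodicPts hs
  have hpred : f^[n + minimalPeriod f s - 1 + 1] s = f^[n] s := by
    rw [Nat.sub_add_cancel (by omega), iterate_add_minimalPeriod_eq]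
  refine Finset.card_eq_one.2
    ⟨⟨pl (f^[n + minimalPeriod f s - 1] s), mem_cyclePlaces.2 ⟨_, rfl⟩⟩,
    Finset.eq_singleton_iff_unique_mem.2 ⟨?_, fun q hq => Subtype.ext ?_⟩⟩
  · simpa [transPost, psubnet, ← hn, hpred] using hpost (n + minimalPeriod f s - 1)
  · obtain ⟨m, hm⟩ := mem_cyclePlaces.1 q.2
    simp only [transPost, psubnet, Finset.mem_filter, Finset.mem_univ, true_and, ← hn, ← hm]
      at hq
    have hnm : f^[n] s = f^[m + 1] s := eq_of_post_pos (hwmg _).1 hq (hpost m)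
    rw [← hm]
    refine congrArg pl ?_
    rw [show n + minimalPeriod f s - 1 = (minimalPeriod f s - 1) + n by omega,
      iterate_add_apply, hnm, ← iterate_add_apply,
      show minimalPeriod f s - 1 + (m + 1) = m + minimalPeriod f s by omega,
      iterate_add_minimalPeriod_eq]

lemma stronglyConnected_psubnet_cyclePlaces :
    (N.psubnet (cyclePlaces f pl s)).stronglyConnected := by
  let D := cyclePlaces f pl s
  let tr (n : ℕ) : D ⊕ {t // N.adjT D t} :=
    .inr ⟨f^[n] s, (adjT_cyclePlaces_iff hwmg hpre hpost).2 ⟨n, rfl⟩⟩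
  let pla (n : ℕ) : D ⊕ {t // N.adjT D t} :=
    .inl ⟨pl (f^[n] s), mem_cyclePlaces.2 ⟨n, rfl⟩⟩
  have hpt (n : ℕ) : (N.psubnet D).arc (pla n) (tr n) := hpre n
  have htp (n : ℕ) : (N.psubnet D).arc (tr (n + 1)) (pla n) := hpost n
  have hdown (n j : ℕ) : Relation.ReflTransGen (N.psubnet D).arc (tr (n + j)) (tr n) := by
    induction j with
    | zero => exact .refl
    | succ j ih => exact .head (htp (n + j)) (.head (hpt (n + j)) ih)
  have htt (a b : ℕ) : Relation.ReflTransGen (N.psubnet D).arc (tr a) (tr b) := by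
    have hk := Nat.le_mul_of_pos_left b (minimalPeriod_pos_of_mem_periodicPts hs)
    have hper : tr (b + (a + minimalPeriod f s * b - b)) = tr a := by
      rw [Nat.add_sub_cancel' (by omega)]
      simp only [tr, iterate_add_apply, ((isPeriodicPt_minimalPeriod f s).mul_const b).eq]
    exact hper ▸ hdown b _
  have hnode (x : D ⊕ {t // N.adjT D t}) : (∃ n, x = pla n) ∨ ∃ n, x = tr n := by
    rcases x with ⟨p, hp⟩ | ⟨u, hu⟩
    · obtain ⟨n, rfl⟩ := mem_cyclePlaces.1 hp
      exact .inl ⟨n, rfl⟩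
    · obtain ⟨n, rfl⟩ := (adjT_cyclePlaces_iff hwmg hpre hpost).1 hu
      exact .inr ⟨n, rfl⟩
  intro x y
  rcases hnode x with ⟨a, rfl⟩ | ⟨a, rfl⟩ <;>
    rcases hnode y with ⟨b, rfl⟩ | ⟨b, rfl⟩
  · exact .head (hpt a) ((htt a (b + 1)).tail (htp b))
  · exact .head (hpt a) (htt a b)
  · exact (htt a (b + 1)).tail (htp b)
  · exact htt a b

theorem isCircuitNet_psubnet_cyclePlaces : (N.psubnet (cyclePlaces f pl s)).isCircuitNet :=
  ⟨⟨.inr ⟨s, (adjT_cyclePlaces_iff hwmg hpre hpost).2 ⟨0, rfl⟩⟩⟩,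
    stronglyConnected_psubnet_cyclePlaces hwmg hpre hpost hs,
    fun p => ⟨placePre_psubnet_cyclePlaces hwmg hpre hpost p,
      placePost_psubnet_cyclePlaces hwmg hpre hpost p⟩,
    fun t => ⟨transPre_psubnet_cyclePlaces hwmg hpre hpost t,
      transPost_psubnet_cyclePlaces hwmg hpre hpost hs t⟩⟩

end Cycle

variable [Fintype P] [Fintype T] {N : PetriNet P T}

lemma exists_dead_feeder (hwmg : N.isWMGle) (hnosrc : ∀ p : P, ∃ t : T, 0 < N.post t p)
    {M : P → ℕ} (hstab : ∀ M', N.reachable M M' → ∀ t, N.deadAt M' t → N.deadAt M t)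
    {t : T} (ht : N.deadAt M t) :
    ∃ p u, 0 < N.pre p t ∧ M p < N.pre p t ∧ 0 < N.post u p ∧ N.deadAt M u := by
  obtain ⟨p, hp, hlt, hfeed⟩ := ht.exists_starved_place fun p => (hwmg p).2
  obtain ⟨u, hu⟩ := hnosrc p
  obtain ⟨M', hM', hd⟩ := hfeed u hu
  exact ⟨p, u, hp, hlt, hu, hstab M' hM' u hd⟩

lemma exists_dead_cycle (hwmg : N.isWMGle) (hnosrc : ∀ p : P, ∃ t : T, 0 < N.post t p)
    {M : P → ℕ} (hstab : ∀ M', N.reachable M M' → ∀ t, N.deadAt M' t → N.deadAt M t)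
    {t₀ : T} (ht₀ : N.deadAt M t₀) :
    ∃ (f : T → T) (pl : T → P) (s : T), s ∈ periodicPts f ∧ ∀ n,
      0 < N.pre (pl (f^[n] s)) (f^[n] s) ∧ M (pl (f^[n] s)) < N.pre (pl (f^[n] s)) (f^[n] s) ∧
        0 < N.post (f^[n + 1] s) (pl (f^[n] s)) := by
  obtain ⟨p₀, u₀, -⟩ := exists_dead_feeder hwmg hnosrc hstab ht₀
  -- `p₀` and `u₀` are junk values for the transitions that are not dead.
  have : ∀ t, ∃ p u, N.deadAt M t →
      0 < N.pre p t ∧ M p < N.pre p t ∧ 0 < N.post u p ∧ N.deadAt M u := fun t => by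
    by_cases ht : N.deadAt M t
    · obtain ⟨p, u, h⟩ := exists_dead_feeder hwmg hnosrc hstab ht
      exact ⟨p, u, fun _ => h⟩
    · exact ⟨p₀, u₀, fun h => absurd h ht⟩
  choose pl f hf using this
  have hdead : ∀ n, N.deadAt M (f^[n] t₀) := fun n => by
    induction n with
    | zero => exact ht₀
    | succ n ih => simpa only [iterate_succ_apply'] using (hf _ ih).2.2.2
  obtain ⟨m, hs⟩ := exists_iterate_mem_periodicPts f t₀
  refine ⟨f, pl, _, hs, fun n => ?_⟩
  obtain ⟨hpre, hlt, hpost, -⟩ := hf _ (iterate_add_apply f n m t₀ ▸ hdead (n + m))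
  exact ⟨hpre, hlt, by rwa [iterate_succ_apply']⟩

theorem live_of_forall_isCircuitNet_live (hwmg : N.isWMGle)
    (hnosrc : ∀ p : P, ∃ t : T, 0 < N.post t p) {M0 : P → ℕ}
    (hall : ∀ D : Finset P, (N.psubnet D).isCircuitNet → (N.psubnet D).live (fun p => M0 p.1)) :
    N.live M0 := by
  by_contra hnl
  obtain ⟨t₀, M, hM, ht₀⟩ := exists_deadAt_of_not_live hnl
  obtain ⟨M₁, hM₁, hstab⟩ := exists_reachable_deadAt_stable (N := N) M
  obtain ⟨f, pl, s, hs, hcyc⟩ := exists_dead_cycle hwmg hnosrc hstab (ht₀.of_reachable hM₁)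
  have hpre n := (hcyc n).1
  have hpost n := (hcyc n).2.2
  have : Nonempty {t // N.adjT (cyclePlaces f pl s) t} :=
    ⟨⟨s, (adjT_cyclePlaces_iff hwmg hpre hpost).2 ⟨0, rfl⟩⟩⟩
  exact not_live_of_reachable_deadlock _ (reachable_psubnet (N.reachable_trans hM hM₁))
    (deadlock_psubnet_cyclePlaces hwmg hpre hpost fun n => (hcyc n).2.1)
    (hall _ (isCircuitNet_psubnet_cyclePlaces hwmg hpre hpost hs))

end PetriNet

/-- A WMG≤ system without source places is live iff every elementary circuit
P-subsystem of it is live. -/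
theorem stmt5 {P T : Type} [Fintype P] [Fintype T]
    (N : PetriNet P T) (M0 : P → ℕ)
    (hwmg : N.isWMGle) (hnosrc : ∀ p : P, ∃ t : T, 0 < N.post t p) :
    N.live M0 ↔
      ∀ D : Finset P, (N.psubnet D).isCircuitNet →
        (N.psubnet D).live (fun p => M0 p.1) :=
  ⟨fun hl _ hC => PetriNet.live_psubnet_of_isCircuitNet hl hC,
    PetriNet.live_of_forall_isCircuitNet_live hwmg hnosrc⟩
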